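/- Let [R, S] be a synchronized interval in the Tamari lattice on Dyck paths of length 2n such that both R and S avoid three consecutive north steps NNN. Then ds(R) = ds(S). -/

import Mathlib

/-- Steps: north `N = (0,1)`, east `E = (1,0)`, diagonal `D = (1,1)`. -/
inductive MStep : Type
  | N | E | D
  deriving DecidableEq

/-- The contribution of a step to the height `y - x` above the diagonal. -/
def MStep.hdiff : MStep → ℤ
  | .N => 1
  | .E => -1
  | .D => 0

/-- The total height change `y - x` along a word of steps. -/
def wsum (p : List MStep) : ℤ := (p.map MStep.hdiff).sum

/-- A (nonempty) Motzkin path: starts at the origin, never goes below the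
diagonal `y = x`, and ends on the diagonal. -/
def IsMotzkin (p : List MStep) : Prop :=
  p ≠ [] ∧ (∀ q, q <+: p → 0 ≤ wsum q) ∧ wsum p = 0

/-- A Dyck path is a Motzkin path with no diagonal step. -/
def IsDyck (p : List MStep) : Prop := IsMotzkin p ∧ MStep.D ∉ p

/-- A path is primitive if it touches the diagonal only at its endpoints. -/
def IsPrimitive (p : List MStep) : Prop :=
  IsMotzkin p ∧ ∀ q, q <+: p → q ≠ [] → q ≠ p → 0 < wsum q

/-- Covering relation for the Tamari-type order on Motzkin paths:
`Q` covers `P` iff `P = P₁·E·P₂·P₃` and `Q = P₁·P₂·E·P₃` with `P₂` a nonempty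
primitive Motzkin path. -/
def MCover (P Q : List MStep) : Prop :=
  ∃ P₁ P₂ P₃ : List MStep, IsMotzkin P₂ ∧ IsPrimitive P₂ ∧
    P = P₁ ++ [MStep.E] ++ P₂ ++ P₃ ∧ Q = P₁ ++ P₂ ++ [MStep.E] ++ P₃

/-- Covering relation of the Tamari order on Dyck paths. -/
def DCover (P Q : List MStep) : Prop :=
  ∃ P₁ P₂ P₃ : List MStep, IsDyck P₂ ∧ IsPrimitive P₂ ∧
    P = P₁ ++ [MStep.E] ++ P₂ ++ P₃ ∧ Q = P₁ ++ P₂ ++ [MStep.E] ++ P₃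

/-- The partial order `≤_M` on Motzkin paths. -/
def MLE : List MStep → List MStep → Prop := Relation.ReflTransGen MCover

/-- The Tamari order `≤_D` on Dyck paths. -/
def DLE : List MStep → List MStep → Prop := Relation.ReflTransGen DCover

/-- Heights of the diagonal steps along a path, starting from height `h`. -/
def clsFrom : List MStep → ℤ → List ℤ
  | [], _ => []
  | .N :: rest, h => clsFrom rest (h + 1)
  | .E :: rest, h => clsFrom rest h
  | .D :: rest, h => (h + 1) :: clsFrom rest (h + 1)

/-- The class of a Motzkin path: the sequence of heights (ending `y`-coordinates)
of its diagonal steps, in the order they occur. -/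
def cls (p : List MStep) : List ℤ := clsFrom p 0

/-- A path avoids `NNN` if it has no three consecutive north steps. -/
def AvoidsNNN (p : List MStep) : Prop := ¬ ([MStep.N, MStep.N, MStep.N] <:+: p)

/-- Callan's bijection `φ`: replace each factor `NE` by `D` and each factor
`NNE` by `N`, leaving remaining east steps unchanged. -/
def phi : List MStep → List MStep
  | [] => []
  | .N :: .N :: .E :: rest => .N :: phi rest
  | .N :: .E :: rest => .D :: phi rest
  | s :: rest => s :: phi rest

/-- The inverse of `φ`: replace each `D` by `NE` and each `N` by `NNE`. -/
def psi : List MStep → List MStep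
  | [] => []
  | .N :: rest => .N :: .N :: .E :: psi rest
  | .D :: rest => .N :: .E :: psi rest
  | .E :: rest => .E :: psi rest

/-- For each north step of the path (in order), record `N` if it is immediately
followed by an east step and `E` otherwise. -/
def typeRaw : List MStep → List MStep
  | [] => []
  | .N :: rest => (if rest.head? = some MStep.E then MStep.N else MStep.E) :: typeRaw rest
  | _ :: rest => typeRaw rest

/-- The type of a Dyck path of length `2n`: the word of length `n - 1` whose
`i`-th letter is `N` iff the `i`-th north step is immediately followed by an
east step (the letter of the last north step is dropped). -/
def typeW (p : List MStep) : List MStep := (typeRaw p).dropLast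

/-- `ds p` is the number of north steps of `p` that are neither immediately
preceded nor immediately followed by another north step. -/
def ds (p : List MStep) : ℕ :=
  ((Finset.range p.length).filter (fun i =>
    p[i]? = some MStep.N ∧ p[i + 1]? ≠ some MStep.N ∧
      (i = 0 ∨ p[i - 1]? ≠ some MStep.N))).card

/-- The number of contacts of a path with the diagonal `y = x` (lattice points
of the path lying on the diagonal, endpoints included). -/
def cont (p : List MStep) : ℕ :=
  ((Finset.range (p.length + 1)).filter (fun i => wsum (p.take i) = 0)).card

/-!
An `NNN`-avoiding Dyck path factors into blocks `E`, `NE` and `NNE`, i.e. it is `ψ (φ p)`. Its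
isolated north steps are those of the `NE` blocks, and its type reads `N` on an `NE` block and
`EN` on an `NNE` block, except that the final `N` is dropped. Hence
`ds p = #N(type) - #E(type) + 1` depends only on the type.
-/

def dsAfter : MStep → List MStep → ℕ
  | _, [] => 0
  | prev, a :: p =>
    (if a = .N ∧ p.head? ≠ some .N ∧ prev ≠ .N then 1 else 0) + dsAfter a p

lemma dsAfter_eq_card (prev : MStep) (p : List MStep) :
    dsAfter prev p = ((Finset.range p.length).filter fun i =>
      p[i]? = some .N ∧ p[i + 1]? ≠ some .N ∧ (prev :: p)[i]? ≠ some .N).card := by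
  induction p generalizing prev with
  | nil => rfl
  | cons a p ih =>
    rw [dsAfter, ih, Finset.card_filter, Finset.card_filter, List.length_cons,
      Finset.sum_range_succ', add_comm]
    congr 1
    simp [List.head?_eq_getElem?]

lemma ds_eq_dsAfter (p : List MStep) : ds p = dsAfter .E p := by
  rw [ds, dsAfter_eq_card]
  refine congrArg Finset.card (Finset.filter_congr fun i _ => ?_)
  cases i <;> simp

lemma dsAfter_E_psi (w : List MStep) : dsAfter .E (psi w) = w.count .D := by
  induction w with
  | nil => rfl
  | cons a w ih => cases a <;> simp [psi, dsAfter, ih, add_comm]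

lemma count_N_typeRaw_psi (w : List MStep) :
    (typeRaw (psi w)).count .N = w.count .N + w.count .D := by
  induction w with
  | nil => rfl
  | cons a w ih => cases a <;> simp [psi, typeRaw, ih] <;> omega

lemma count_E_typeRaw_psi (w : List MStep) : (typeRaw (psi w)).count .E = w.count .N := by
  induction w with
  | nil => rfl
  | cons a w ih => cases a <;> simp [psi, typeRaw, ih]

lemma ds_psi_add_count_E_typeRaw (w : List MStep) :
    ds (psi w) + (typeRaw (psi w)).count .E = (typeRaw (psi w)).count .N := by
  rw [ds_eq_dsAfter, dsAfter_E_psi, count_N_typeRaw_psi, count_E_typeRaw_psi, add_comm]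

lemma AvoidsNNN.of_cons {a : MStep} {p : List MStep} (h : AvoidsNNN (a :: p)) :
    AvoidsNNN p :=
  fun hp => h (hp.trans (List.suffix_cons a p).isInfix)

lemma getLast?_ne_of_cons {a b : MStep} {p : List MStep} (h : (a :: p).getLast? ≠ some b) :
    p.getLast? ≠ some b := by
  cases p with
  | nil => simp
  | cons c p => rwa [List.getLast?_cons_cons] at h

lemma psi_phi : ∀ {p : List MStep}, MStep.D ∉ p → AvoidsNNN p → p.getLast? ≠ some .N →
    psi (phi p) = p
  | [], _, _, _ => rfl
  | .E :: p, hD, ha, hl => by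
    simp only [phi, psi, psi_phi (fun h => hD (by simp [h])) ha.of_cons (getLast?_ne_of_cons hl)]
  | .N :: .E :: p, hD, ha, hl => by
    simp only [phi, psi, psi_phi (fun h => hD (by simp [h])) ha.of_cons.of_cons
      (getLast?_ne_of_cons (getLast?_ne_of_cons hl))]
  | .N :: .N :: .E :: p, hD, ha, hl => by
    simp only [phi, psi, psi_phi (fun h => hD (by simp [h])) ha.of_cons.of_cons.of_cons
      (getLast?_ne_of_cons (getLast?_ne_of_cons (getLast?_ne_of_cons hl)))]
  | .N :: .N :: .N :: _, _, ha, _ => absurd ⟨[], _, rfl⟩ ha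
  | [.N], _, _, hl | [.N, .N], _, _, hl => absurd rfl hl
  | .D :: _, hD, _, _ | .N :: .D :: _, hD, _, _ | .N :: .N :: .D :: _, hD, _, _ =>
    absurd (by simp) hD

lemma ds_add_count_E_typeRaw {p : List MStep} (hD : MStep.D ∉ p) (ha : AvoidsNNN p)
    (hl : p.getLast? ≠ some .N) : ds p + (typeRaw p).count .E = (typeRaw p).count .N := by
  rw [← psi_phi hD ha hl]
  exact ds_psi_add_count_E_typeRaw _

lemma typeRaw_eq_nil_of_N_not_mem {p : List MStep} (h : MStep.N ∉ p) : typeRaw p = [] := by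
  induction p with
  | nil => rfl
  | cons a p ih => cases a <;> simp_all [typeRaw]

lemma exists_typeRaw_eq_append_N : ∀ {p : List MStep}, MStep.D ∉ p →
    p.getLast? ≠ some .N → MStep.N ∈ p → ∃ t, typeRaw p = t ++ [.N]
  | .E :: p, hD, hl, hN => by
    obtain ⟨t, ht⟩ := exists_typeRaw_eq_append_N (fun h => hD (by simp [h]))
      (getLast?_ne_of_cons hl) (by simpa using hN)
    exact ⟨t, by simpa [typeRaw] using ht⟩
  | .N :: .E :: p, hD, hl, _ => by
    by_cases hNp : MStep.N ∈ p
    · obtain ⟨t, ht⟩ := exists_typeRaw_eq_append_N (fun h => hD (by simp [h]))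
        (getLast?_ne_of_cons (getLast?_ne_of_cons hl)) hNp
      exact ⟨.N :: t, by simp [typeRaw, ht]⟩
    · exact ⟨[], by simp [typeRaw, typeRaw_eq_nil_of_N_not_mem hNp]⟩
  | .N :: .N :: p, hD, hl, _ => by
    obtain ⟨t, ht⟩ := exists_typeRaw_eq_append_N (p := .N :: p) (fun h => hD (by simp_all))
      (getLast?_ne_of_cons hl) (by simp)
    have hNN : typeRaw (.N :: .N :: p) = .E :: typeRaw (.N :: p) := rfl
    exact ⟨.E :: t, by rw [hNN, ht]; rfl⟩
  | [], _, _, hN => absurd hN (by simp)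
  | [.N], _, hl, _ => absurd rfl hl
  | .D :: _, hD, _, _ | .N :: .D :: _, hD, _, _ => absurd (by simp) hD

lemma wsum_append (p q : List MStep) : wsum (p ++ q) = wsum p + wsum q := by
  simp [wsum]

lemma IsMotzkin.getLast?_ne_N {p : List MStep} (hp : IsMotzkin p) : p.getLast? ≠ some .N := by
  intro h
  obtain ⟨q, rfl⟩ := List.getLast?_eq_some_iff.1 h
  have hq := hp.2.1 q (List.prefix_append q _)
  have hsum := hp.2.2
  rw [wsum_append, show wsum [.N] = 1 by simp [wsum, MStep.hdiff]] at hsum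
  omega

lemma IsDyck.N_mem {p : List MStep} (hp : IsDyck p) : MStep.N ∈ p := by
  obtain ⟨a, q, rfl⟩ := List.exists_cons_of_ne_nil hp.1.1
  have ha := hp.1.2.1 [a] (by simp)
  cases a
  · simp
  · simp [wsum, MStep.hdiff] at ha
  · exact absurd (by simp) hp.2

lemma IsDyck.typeRaw_eq_typeW_append_N {p : List MStep} (hp : IsDyck p) :
    typeRaw p = typeW p ++ [.N] := by
  obtain ⟨t, ht⟩ := exists_typeRaw_eq_append_N hp.2 hp.1.getLast?_ne_N hp.N_mem
  simp [typeW, ht]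

lemma IsDyck.ds_add_count_E_typeW {p : List MStep} (hp : IsDyck p) (ha : AvoidsNNN p) :
    ds p + (typeW p).count .E = (typeW p).count .N + 1 := by
  have h := ds_add_count_E_typeRaw hp.2 ha hp.1.getLast?_ne_N
  rw [hp.typeRaw_eq_typeW_append_N] at h
  simpa using h

theorem ds_eq_of_synchronized_general (R S : List MStep)
    (hR : IsDyck R) (hS : IsDyck S)
    (hRa : AvoidsNNN R) (hSa : AvoidsNNN S)
    (hty : typeW R = typeW S) :
    ds R = ds S := by
  have hR' := hR.ds_add_count_E_typeW hRa
  have hS' := hS.ds_add_count_E_typeW hSa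
  rw [hty] at hR'
  omega

/-- If `[R, S]` is a synchronized interval in the Tamari
lattice on Dyck paths of length `2n` (i.e. `R ≤_D S` and `Type(R) = Type(S)`)
and both `R` and `S` avoid `NNN`, then `ds R = ds S`. -/
theorem ds_eq_of_synchronized (n : ℕ) (R S : List MStep)
    (hR : IsDyck R) (hS : IsDyck S)
    (hRn : R.length = 2 * n) (hSn : S.length = 2 * n)
    (hRa : AvoidsNNN R) (hSa : AvoidsNNN S)
    (hle : DLE R S) (hty : typeW R = typeW S) :
    ds R = ds S :=
  ds_eq_of_synchronized_general R S hR hS hRa hSa hty
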